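/- With viscosities ζ = P/(2Δ(ε̇)) and η = ζ/e², the dissipation σ : ε̇ satisfies σ : ε̇ = (P/(2Δ(ε̇)))·Δ_P(ε̇)² − (P/2) tr(ε̇); in particular, if tr(ε̇) ≤ 0 and P ≥ 0 then σ : ε̇ ≥ 0. -/
import Mathlib


open Matrix

/-- Deviatoric part of a 2×2 matrix. -/
noncomputable def dev (A : Matrix (Fin 2) (Fin 2) ℝ) : Matrix (Fin 2) (Fin 2) ℝ :=
  A - (A.trace / 2) • 1

/-- Frobenius inner product of 2×2 matrices. -/
def frob (A B : Matrix (Fin 2) (Fin 2) ℝ) : ℝ := ∑ i, ∑ j, A i j * B i j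

/-- Plastic regime quantity `Δ_P(ε̇)`. -/
noncomputable def deltaP (e : ℝ) (A : Matrix (Fin 2) (Fin 2) ℝ) : ℝ :=
  Real.sqrt ((2 / e ^ 2) * frob (dev A) (dev A) + A.trace ^ 2)

/-- Regularized quantity `Δ(ε̇) = √(Δ_P(ε̇)² + Δ_min²)`. -/
noncomputable def delta (e Δmin : ℝ) (A : Matrix (Fin 2) (Fin 2) ℝ) : ℝ :=
  Real.sqrt (deltaP e A ^ 2 + Δmin ^ 2)

/-- With `ζ = P/(2Δ(ε̇))` and `η = ζ/e²`, the dissipation satisfies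
`σ : ε̇ = ζ Δ_P(ε̇)² − (P/2) tr ε̇`; in particular `σ : ε̇ ≥ 0` if `tr ε̇ ≤ 0`. -/
theorem vp_dissipation_formula_and_nonneg
    (e Δmin Pstr : ℝ) (he : 0 < e) (hΔ : 0 < Δmin) (hP : 0 ≤ Pstr)
    (A : Matrix (Fin 2) (Fin 2) ℝ) (hA : A.IsSymm) :
    let ζ := Pstr / (2 * delta e Δmin A)
    let η := ζ / e ^ 2
    let σ := (2 * η) • dev A + (ζ * A.trace) • (1 : Matrix (Fin 2) (Fin 2) ℝ)
        - (Pstr / 2) • (1 : Matrix (Fin 2) (Fin 2) ℝ)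
    frob σ A = (Pstr / (2 * delta e Δmin A)) * deltaP e A ^ 2 - (Pstr / 2) * A.trace
      ∧ (A.trace ≤ 0 → 0 ≤ frob σ A) := by
  intro ζ η σ
  have hF : 0 ≤ frob (dev A) (dev A) := by
    apply Finset.sum_nonneg
    intro i _
    apply Finset.sum_nonneg
    intro j _
    exact mul_self_nonneg _
  have hin : 0 ≤ (2 / e ^ 2) * frob (dev A) (dev A) + A.trace ^ 2 := by
    have : 0 ≤ (2 / e ^ 2) * frob (dev A) (dev A) := by positivity
    nlinarith [sq_nonneg A.trace]
  have hq : deltaP e A ^ 2 = (2 / e ^ 2) * frob (dev A) (dev A) + A.trace ^ 2 :=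
    Real.sq_sqrt hin
  have hd : 0 < delta e Δmin A := by
    apply Real.sqrt_pos.mpr
    nlinarith [sq_nonneg (deltaP e A)]
  have he' : (e : ℝ) ≠ 0 := ne_of_gt he
  have hd' : delta e Δmin A ≠ 0 := ne_of_gt hd
  have key : frob σ A = ζ * ((2 / e ^ 2) * frob (dev A) (dev A) + A.trace ^ 2)
      - Pstr / 2 * A.trace := by
    show frob ((2 * η) • dev A + (ζ * A.trace) • (1 : Matrix (Fin 2) (Fin 2) ℝ)
        - (Pstr / 2) • (1 : Matrix (Fin 2) (Fin 2) ℝ)) A = _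
    show frob _ A = Pstr / (2 * delta e Δmin A) * _ - _
    simp only [frob, dev, η, ζ, Matrix.trace, Matrix.diag, Fin.sum_univ_two,
      Matrix.sub_apply, Matrix.add_apply, Matrix.smul_apply, Matrix.one_apply,
      smul_eq_mul]
    norm_num
    field_simp
    ring
  refine ⟨by rw [key, ← hq], fun hT => ?_⟩
  rw [key]
  have hζ : 0 ≤ ζ := div_nonneg hP (by linarith)
  have h1 : 0 ≤ ζ * ((2 / e ^ 2) * frob (dev A) (dev A) + A.trace ^ 2) :=
    mul_nonneg hζ hin
  nlinarith
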